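/- Let p ∈ [1/2, 1], q ∈ (0,1) and c ≥ 0. If kl(p,q) ≤ c, then q ≥ (1/4)·exp(−2c). -/

import Mathlib

/-- Kullback–Leibler divergence between Bernoulli distributions of parameters `p` and `q`
(the convention `0 · log(0/x) = 0` holds automatically since `0 * x = 0` in `ℝ`). -/
noncomputable def klBer (p q : ℝ) : ℝ :=
  p * Real.log (p / q) + (1 - p) * Real.log ((1 - p) / (1 - q))

open Real

lemma mul_log_div_of_ne_zero (a : ℝ) {b : ℝ} (hb : b ≠ 0) :
    a * log (a / b) = a * log a - a * log b := by
  rcases eq_or_ne a 0 with rfl | ha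
  · simp
  · rw [log_div ha hb, mul_sub]

lemma klBer_eq_neg_binEntropy_sub (p : ℝ) {q : ℝ} (hq₀ : q ≠ 0) (hq₁ : q ≠ 1) :
    klBer p q = -binEntropy p - p * log q - (1 - p) * log (1 - q) := by
  rw [klBer, binEntropy, mul_log_div_of_ne_zero p hq₀,
    mul_log_div_of_ne_zero (1 - p) (sub_ne_zero.2 hq₁.symm), log_inv, log_inv]
  ring

lemma neg_log_two_sub_mul_log_le_klBer {p q : ℝ} (hp : p ≤ 1) (hq : q ∈ Set.Ioo (0 : ℝ) 1) :
    -log 2 - p * log q ≤ klBer p q := by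
  obtain ⟨hq₀, hq₁⟩ := hq
  have hlog : log (1 - q) ≤ 0 := log_nonpos (by linarith) (by linarith)
  rw [klBer_eq_neg_binEntropy_sub p hq₀.ne' hq₁.ne]
  nlinarith [binEntropy_le_log_two (p := p)]

theorem klBer_le_imp (p q c : ℝ) (hp : p ∈ Set.Icc (1 / 2 : ℝ) 1)
    (hq : q ∈ Set.Ioo (0 : ℝ) 1) (h : klBer p q ≤ c) :
    (1 / 4 : ℝ) * Real.exp (-2 * c) ≤ q := by
  have hlog_q : log q ≤ 0 := log_nonpos hq.1.le hq.2.le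
  -- `p ≥ 1/2` and `log q ≤ 0` give `log q / 2 ≥ p log q ≥ -(c + log 2)`.
  have hlog : -2 * c - 2 * log 2 ≤ log q := by
    nlinarith [(neg_log_two_sub_mul_log_le_klBer hp.2 hq).trans h, hp.1]
  calc (1 / 4 : ℝ) * exp (-2 * c) = exp (-2 * c - 2 * log 2) := by
        rw [exp_sub, ← log_rpow two_pos, exp_log (by positivity)]
        norm_num; ring
    _ ≤ exp (log q) := exp_le_exp.2 hlog
    _ = q := exp_log hq.1
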